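/- (Adams, weak endpoint) Let $0 \le \lambda < n$ and $0 < \alpha < n - \lambda$. Then the Riesz potential $I_\alpha$ is bounded from $M^{1,\lambda}(\mathbb{R}^n)$ to the weak Morrey space $M_*^{\frac{n-\lambda}{n-\lambda-\alpha},\lambda}(\mathbb{R}^n)$: there is $C = C(n,\alpha,\lambda)$ such that $\|I_\alpha f\|_{M_*^{\frac{n-\lambda}{n-\lambda-\alpha},\lambda}} \le C \|f\|_{M^{1,\lambda}}$. -/

import Mathlib

open MeasureTheory Metric ENNReal

/-- The Morrey norm `‖f‖_{M^{p,s}(Ω)} = sup_{x, r>0} r^{-s/p} ‖f‖_{L^p(B_r(x) ∩ Ω)}`. -/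
noncomputable def morreyNorm {n : ℕ} (p s : ℝ) (Ω : Set (EuclideanSpace ℝ (Fin n)))
    (f : EuclideanSpace ℝ (Fin n) → ℝ) : ℝ≥0∞ :=
  ⨆ (x : EuclideanSpace ℝ (Fin n)) (r : ℝ) (_ : 0 < r),
    ENNReal.ofReal (r ^ (-(s / p))) *
      eLpNorm ((Metric.ball x r ∩ Ω).indicator f) (ENNReal.ofReal p) volume

/-- The weak `L^q` quasinorm of `f` on a set `s`. -/
noncomputable def weakLpOn {n : ℕ} (q : ℝ) (f : EuclideanSpace ℝ (Fin n) → ℝ)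
    (s : Set (EuclideanSpace ℝ (Fin n))) : ℝ≥0∞ :=
  ⨆ (t : ℝ) (_ : 0 < t),
    ENNReal.ofReal t * (volume {x ∈ s | t < |f x|}) ^ (1 / q)

/-- The weak Morrey norm `‖f‖_{M_*^{q,s}(Ω)}`. -/
noncomputable def weakMorreyNorm {n : ℕ} (q s : ℝ) (Ω : Set (EuclideanSpace ℝ (Fin n)))
    (f : EuclideanSpace ℝ (Fin n) → ℝ) : ℝ≥0∞ :=
  ⨆ (x : EuclideanSpace ℝ (Fin n)) (r : ℝ) (_ : 0 < r),
    ENNReal.ofReal (r ^ (-(s / q))) * weakLpOn q f (Metric.ball x r ∩ Ω)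

/-- The Riesz potential `I_α f (x) = ∫ |x-y|^{α-n} |f(y)| dy`. -/
noncomputable def rieszPotential {n : ℕ} (α : ℝ) (f : EuclideanSpace ℝ (Fin n) → ℝ)
    (x : EuclideanSpace ℝ (Fin n)) : ℝ :=
  (∫⁻ y, ENNReal.ofReal (‖x - y‖ ^ (α - (n : ℝ)) * |f y|)).toReal

/-!
Hedberg's splitting. Cut `∫ d(x, y)^(α - n) dν(y)` at distance `δ`. Summing the growth bound
`ν(B(x, ρ)) ≤ A ρ^λ` over dyadic annuli bounds the far part by `≲ A δ^(α + λ - n)`; for `δ`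
chosen with this equal to `t / 2`, the superlevel set `{I > t}` lies in `{near part > t / 2}`.
By Chebyshev and Tonelli (the near kernel has integral `≲ δ^α` by the same dyadic count for
Lebesgue measure), its part in `B(x₀, r)` has measure `≲ δ^α ν(B(x₀, r + δ)) / t ≲ δ^(n - λ) r^λ`
when `δ ≤ r`; when `r < δ` the trivial bound `|B(x₀, r)| ≲ r^n ≤ δ^(n - λ) r^λ` gives the same.
Raised to the power `1/q` and multiplied by `t r^(-λ/q)`, the bound `δ^(n - λ) r^λ` becomes a
constant times `A`. A function in `M^{1,λ}` is exactly the density of a measure with growth of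
order `λ`.
-/

open Set

def HasGrowth {X : Type*} [PseudoMetricSpace X] [MeasurableSpace X] (ν : Measure X) (a A : ℝ) :
    Prop :=
  ∀ (x : X) (ρ : ℝ), 0 < ρ → ν (closedBall x ρ) ≤ ENNReal.ofReal (A * ρ ^ a)

lemma ENNReal.tsum_ofReal_mul_geometric {c s : ℝ} (hc : 0 ≤ c) (hs0 : 0 ≤ s) (hs1 : s < 1) :
    ∑' k : ℕ, ENNReal.ofReal (c * s ^ k) = ENNReal.ofReal (c / (1 - s)) := by
  rw [← ENNReal.ofReal_tsum_of_nonneg (fun k => by positivity)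
    ((summable_geometric_of_lt_one hs0 hs1).mul_left c), tsum_mul_left,
    tsum_geometric_of_lt_one hs0 hs1, div_eq_mul_inv]

lemma Real.mul_pow_rpow {c r : ℝ} (hc : 0 ≤ c) (hr : 0 ≤ r) (k : ℕ) (b : ℝ) :
    (c * r ^ k) ^ b = c ^ b * (r ^ b) ^ k := by
  rw [Real.mul_rpow hc (pow_nonneg hr k), Real.rpow_pow_comm hr]

section MetricMeasure

variable {X : Type*} [PseudoMetricSpace X]

lemma compl_ball_subset_iUnion_annulus (x : X) {δ : ℝ} (hδ : 0 < δ) :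
    (ball x δ)ᶜ ⊆ ⋃ k : ℕ, closedBall x (2 * (δ * 2 ^ k)) \ ball x (δ * 2 ^ k) := by
  intro y hy
  rw [mem_compl_iff, mem_ball', not_lt] at hy
  obtain ⟨k, hk, hk'⟩ := exists_nat_pow_near ((one_le_div hδ).2 hy) one_lt_two
  rw [le_div_iff₀ hδ] at hk
  rw [div_lt_iff₀ hδ, pow_succ] at hk'
  refine mem_iUnion.2 ⟨k, ?_, ?_⟩
  · rw [mem_closedBall']
    linarith
  · rw [mem_ball', not_lt]
    linarith

lemma ball_subset_union_iUnion_annulus (x : X) {δ : ℝ} (hδ : 0 < δ) :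
    ball x δ ⊆ closedBall x 0 ∪
      ⋃ k : ℕ, closedBall x (2 * (δ / 2 * 2⁻¹ ^ k)) \ ball x (δ / 2 * 2⁻¹ ^ k) := by
  intro y hy
  rw [mem_ball'] at hy
  rcases (dist_nonneg (x := x) (y := y)).eq_or_lt with h0 | hpos
  · exact Or.inl (mem_closedBall'.2 h0.symm.le)
  obtain ⟨k, hk, hk'⟩ := exists_nat_pow_near ((one_le_div hpos).2 hy.le) one_lt_two
  rw [le_div_iff₀ hpos] at hk
  rw [div_lt_iff₀ hpos] at hk'
  have hinner : δ / 2 * 2⁻¹ ^ k = δ / 2 ^ (k + 1) := by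
    rw [inv_pow, pow_succ]
    ring
  have houter : 2 * (δ / 2 * 2⁻¹ ^ k) = δ / 2 ^ k := by
    rw [inv_pow]
    field_simp
  refine Or.inr (mem_iUnion.2 ⟨k, ?_, ?_⟩)
  · rw [houter, mem_closedBall', le_div_iff₀ (by positivity)]
    linarith
  · rw [hinner, mem_ball', not_lt, div_le_iff₀ (by positivity)]
    linarith

noncomputable def nearKernel (p δ : ℝ) (q : X × X) : ℝ≥0∞ :=
  (ball q.1 δ).indicator (fun y => ENNReal.ofReal (dist q.1 y ^ p)) q.2

lemma nearKernel_swap (p δ : ℝ) (x y : X) : nearKernel p δ (x, y) = nearKernel p δ (y, x) := by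
  simp only [nearKernel, indicator, mem_ball, dist_comm x y]

variable [MeasurableSpace X]

lemma HasGrowth.eq_zero {ν : Measure X} {a : ℝ} (hν : HasGrowth ν a 0) : ν = 0 := by
  rcases isEmpty_or_nonempty X with hX | ⟨⟨x⟩⟩
  · exact Measure.eq_zero_of_isEmpty ν
  rw [← Measure.measure_univ_eq_zero, ← iUnion_closedBall_nat x]
  refine measure_iUnion_null fun k => le_antisymm ?_ zero_le
  calc ν (closedBall x k) ≤ ν (closedBall x (k + 1)) :=
        measure_mono (closedBall_subset_closedBall (by linarith))
    _ ≤ ENNReal.ofReal (0 * ((k : ℝ) + 1) ^ a) := hν x _ (by positivity)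
    _ = 0 := by simp

variable [OpensMeasurableSpace X] {μ ν : Measure X} {a A p : ℝ}

lemma HasGrowth.setLIntegral_annulus_le (hν : HasGrowth ν a A) (hp : p ≤ 0) (x : X) {ρ : ℝ}
    (hρ : 0 < ρ) :
    ∫⁻ y in closedBall x (2 * ρ) \ ball x ρ, ENNReal.ofReal (dist x y ^ p) ∂ν ≤
      ENNReal.ofReal (2 ^ a * A * ρ ^ (a + p)) := by
  calc ∫⁻ y in closedBall x (2 * ρ) \ ball x ρ, ENNReal.ofReal (dist x y ^ p) ∂ν
      ≤ ∫⁻ _ in closedBall x (2 * ρ) \ ball x ρ, ENNReal.ofReal (ρ ^ p) ∂ν := by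
        refine setLIntegral_mono' (measurableSet_closedBall.diff measurableSet_ball)
          fun y hy => ENNReal.ofReal_le_ofReal (Real.rpow_le_rpow_of_nonpos hρ ?_ hp)
        rw [← not_lt, ← mem_ball']
        exact hy.2
    _ ≤ ENNReal.ofReal (ρ ^ p) * ENNReal.ofReal (A * (2 * ρ) ^ a) := by
        rw [setLIntegral_const]
        gcongr
        exact (measure_mono sdiff_subset).trans (hν x _ (by positivity))
    _ = ENNReal.ofReal (2 ^ a * A * ρ ^ (a + p)) := by
        rw [← ENNReal.ofReal_mul (by positivity), Real.mul_rpow zero_le_two hρ.le,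
          Real.rpow_add hρ]
        ring_nf

lemma HasGrowth.setLIntegral_compl_ball_le (hν : HasGrowth ν a A) (hA : 0 ≤ A) (hp : p ≤ 0)
    (hap : a + p < 0) (x : X) {δ : ℝ} (hδ : 0 < δ) :
    ∫⁻ y in (ball x δ)ᶜ, ENNReal.ofReal (dist x y ^ p) ∂ν ≤
      ENNReal.ofReal (2 ^ a * A * δ ^ (a + p) / (1 - 2 ^ (a + p))) := by
  calc ∫⁻ y in (ball x δ)ᶜ, ENNReal.ofReal (dist x y ^ p) ∂ν
      ≤ ∑' k : ℕ, ∫⁻ y in closedBall x (2 * (δ * 2 ^ k)) \ ball x (δ * 2 ^ k),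
          ENNReal.ofReal (dist x y ^ p) ∂ν :=
        (lintegral_mono_set (compl_ball_subset_iUnion_annulus x hδ)).trans
          (lintegral_iUnion_le _ _)
    _ ≤ ∑' k : ℕ, ENNReal.ofReal (2 ^ a * A * δ ^ (a + p) * (2 ^ (a + p)) ^ k) := by
        gcongr with k
        refine (hν.setLIntegral_annulus_le hp x (by positivity)).trans_eq ?_
        rw [Real.mul_pow_rpow hδ.le zero_le_two]
        ring_nf
    _ = _ := ENNReal.tsum_ofReal_mul_geometric (by positivity) (by positivity)
        (Real.rpow_lt_one_of_one_lt_of_neg one_lt_two hap)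

lemma HasGrowth.setLIntegral_ball_le (hν : HasGrowth ν a A) (hA : 0 ≤ A) (hp : p < 0)
    (hap : 0 < a + p) (x : X) {δ : ℝ} (hδ : 0 < δ) :
    ∫⁻ y in ball x δ, ENNReal.ofReal (dist x y ^ p) ∂ν ≤
      ENNReal.ofReal (2 ^ a * A * (δ / 2) ^ (a + p) / (1 - 2⁻¹ ^ (a + p))) := by
  have hcentre : ∫⁻ y in closedBall x 0, ENNReal.ofReal (dist x y ^ p) ∂ν = 0 := by
    rw [setLIntegral_congr_fun measurableSet_closedBall (g := fun _ => 0) fun y hy => ?_,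
      lintegral_zero]
    rw [le_antisymm (mem_closedBall'.1 hy) dist_nonneg, Real.zero_rpow hp.ne, ENNReal.ofReal_zero]
  calc ∫⁻ y in ball x δ, ENNReal.ofReal (dist x y ^ p) ∂ν
      ≤ ∑' k : ℕ, ∫⁻ y in closedBall x (2 * (δ / 2 * 2⁻¹ ^ k)) \ ball x (δ / 2 * 2⁻¹ ^ k),
          ENNReal.ofReal (dist x y ^ p) ∂ν := by
        refine (lintegral_mono_set (ball_subset_union_iUnion_annulus x hδ)).trans ?_
        refine (lintegral_union_le _ _ _).trans ?_
        rw [hcentre, zero_add]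
        exact lintegral_iUnion_le _ _
    _ ≤ ∑' k : ℕ, ENNReal.ofReal (2 ^ a * A * (δ / 2) ^ (a + p) * (2⁻¹ ^ (a + p)) ^ k) := by
        gcongr with k
        refine (hν.setLIntegral_annulus_le hp.le x (by positivity)).trans_eq ?_
        rw [Real.mul_pow_rpow (by positivity) (by norm_num)]
        ring_nf
    _ = _ := ENNReal.tsum_ofReal_mul_geometric (by positivity) (by positivity)
        (Real.rpow_lt_one (by norm_num) (by norm_num) hap)

lemma lintegral_nearKernel (ν : Measure X) (p δ : ℝ) (x : X) :
    ∫⁻ y, nearKernel p δ (x, y) ∂ν = ∫⁻ y in ball x δ, ENNReal.ofReal (dist x y ^ p) ∂ν :=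
  lintegral_indicator measurableSet_ball _

variable [SecondCountableTopology X]

lemma measurable_nearKernel (p δ : ℝ) :
    Measurable (nearKernel (X := X) p δ) :=
  Measurable.ite (measurableSet_lt (continuous_snd.dist continuous_fst).measurable measurable_const)
    ((continuous_fst.dist continuous_snd).measurable.pow_const p).ennreal_ofReal measurable_const

variable [SFinite μ]

lemma HasGrowth.lintegral_ball_lintegral_ball_le [SFinite ν] {V : ℝ} (hμ : HasGrowth μ a V)
    (hV : 0 ≤ V) (hp : p < 0) (hap : 0 < a + p) (x₀ : X) (r : ℝ) {δ : ℝ} (hδ : 0 < δ) :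
    ∫⁻ x in ball x₀ r, ∫⁻ y in ball x δ, ENNReal.ofReal (dist x y ^ p) ∂ν ∂μ ≤
      ENNReal.ofReal (2 ^ a * V * (δ / 2) ^ (a + p) / (1 - 2⁻¹ ^ (a + p))) *
        ν (ball x₀ (r + δ)) := by
  have hsupport : ∀ x ∈ ball x₀ r,
      Function.support (fun y => nearKernel p δ (x, y)) ⊆ ball x₀ (r + δ) := by
    intro x hx y hy
    have hxy : y ∈ ball x δ := by
      by_contra h
      exact hy (indicator_of_notMem h _)
    rw [mem_ball] at hx hxy ⊢
    linarith [dist_triangle y x x₀]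
  calc ∫⁻ x in ball x₀ r, ∫⁻ y in ball x δ, ENNReal.ofReal (dist x y ^ p) ∂ν ∂μ
      = ∫⁻ x in ball x₀ r, ∫⁻ y in ball x₀ (r + δ), nearKernel p δ (x, y) ∂ν ∂μ := by
        refine setLIntegral_congr_fun measurableSet_ball fun x hx => ?_
        rw [setLIntegral_eq_of_support_subset (hsupport x hx), lintegral_nearKernel]
    _ ≤ ∫⁻ x, ∫⁻ y in ball x₀ (r + δ), nearKernel p δ (x, y) ∂ν ∂μ :=
        setLIntegral_le_lintegral _ _
    _ = ∫⁻ y in ball x₀ (r + δ), ∫⁻ x, nearKernel p δ (x, y) ∂μ ∂ν :=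
        lintegral_lintegral_swap (measurable_nearKernel p δ).aemeasurable
    _ ≤ ∫⁻ _ in ball x₀ (r + δ),
          ENNReal.ofReal (2 ^ a * V * (δ / 2) ^ (a + p) / (1 - 2⁻¹ ^ (a + p))) ∂ν := by
        refine lintegral_mono fun y => ?_
        simp_rw [nearKernel_swap p δ _ y]
        rw [lintegral_nearKernel]
        exact hμ.setLIntegral_ball_le hV hp hap y hδ
    _ = _ := setLIntegral_const _ _

lemma HasGrowth.measure_superlevel_le [SFinite ν] {d lam V : ℝ} (hμ : HasGrowth μ d V)
    (hV : 0 ≤ V) (hν : HasGrowth ν lam A) (hA : 0 ≤ A) (hp : p < 0) (hlp : lam + p < 0)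
    (hdp : 0 < d + p) {t δ : ℝ} (ht : 0 < t) (hδ : 0 < δ)
    (hfar : 2 ^ lam * A * δ ^ (lam + p) / (1 - 2 ^ (lam + p)) ≤ t / 2) (x₀ : X) {r : ℝ}
    (hr : 0 < r) :
    μ {x ∈ ball x₀ r | ENNReal.ofReal t < ∫⁻ y, ENNReal.ofReal (dist x y ^ p) ∂ν} ≤
      ENNReal.ofReal (2 / t * (2 ^ d * V * (δ / 2) ^ (d + p) / (1 - 2⁻¹ ^ (d + p))) *
        (A * (r + δ) ^ lam)) := by
  set N := fun x => ∫⁻ y in ball x δ, ENNReal.ofReal (dist x y ^ p) ∂ν with hN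
  have hNmeas : Measurable N := by
    simp_rw [hN, ← lintegral_nearKernel]
    exact (measurable_nearKernel p δ).lintegral_prod_right'
  have hsplit : ∀ x, ∫⁻ y, ENNReal.ofReal (dist x y ^ p) ∂ν ≤ N x + ENNReal.ofReal (t / 2) := by
    intro x
    rw [← lintegral_add_compl _ measurableSet_ball]
    gcongr
    exact (hν.setLIntegral_compl_ball_le hA hp.le hlp x hδ).trans (ENNReal.ofReal_le_ofReal hfar)
  have hsub : {x ∈ ball x₀ r | ENNReal.ofReal t < ∫⁻ y, ENNReal.ofReal (dist x y ^ p) ∂ν} ⊆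
      {x | ENNReal.ofReal (t / 2) ≤ N x} ∩ ball x₀ r := by
    rintro x ⟨hx, hlt⟩
    refine ⟨((ENNReal.add_lt_add_iff_right (ENNReal.ofReal_ne_top (r := t / 2))).1 ?_).le, hx⟩
    rw [← ENNReal.ofReal_add (by positivity) (by positivity), add_halves]
    exact hlt.trans_le (hsplit x)
  calc μ {x ∈ ball x₀ r | ENNReal.ofReal t < ∫⁻ y, ENNReal.ofReal (dist x y ^ p) ∂ν}
      ≤ μ.restrict (ball x₀ r) {x | ENNReal.ofReal (t / 2) ≤ N x} := by
        rw [Measure.restrict_apply (measurableSet_le measurable_const hNmeas)]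
        exact measure_mono hsub
    _ ≤ (∫⁻ x in ball x₀ r, N x ∂μ) / ENNReal.ofReal (t / 2) :=
        meas_ge_le_lintegral_div hNmeas.aemeasurable (by simpa using ht) ENNReal.ofReal_ne_top
    _ ≤ ENNReal.ofReal (2 ^ d * V * (δ / 2) ^ (d + p) / (1 - 2⁻¹ ^ (d + p))) *
          ν (ball x₀ (r + δ)) / ENNReal.ofReal (t / 2) := by
        gcongr
        exact hμ.lintegral_ball_lintegral_ball_le hV hp hdp x₀ r hδ
    _ = ENNReal.ofReal (2 / t * (2 ^ d * V * (δ / 2) ^ (d + p) / (1 - 2⁻¹ ^ (d + p)))) *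
          ν (ball x₀ (r + δ)) := by
        rw [ENNReal.div_eq_inv_mul, ← ENNReal.ofReal_inv_of_pos (by positivity), ← mul_assoc,
          ← ENNReal.ofReal_mul (by positivity), inv_div]
    _ ≤ _ := by
        rw [ENNReal.ofReal_mul' (q := A * (r + δ) ^ lam) (by positivity)]
        gcongr
        exact (measure_mono ball_subset_closedBall).trans (hν _ _ (by positivity))

lemma HasGrowth.exists_measure_superlevel_le {d lam V α : ℝ} (hμ : HasGrowth μ d V)
    (hV : 0 < V) (hlam : 0 ≤ lam) (hα : 0 < α) (hαd : α < d - lam) :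
    ∃ c K : ℝ, 0 < c ∧ 0 < K ∧ ∀ (ν : Measure X) [SFinite ν] (A : ℝ), 0 < A →
      HasGrowth ν lam A → ∀ (x₀ : X) {r t δ : ℝ}, 0 < r → 0 < t → 0 < δ →
        t * δ ^ (d - lam - α) = c * A →
        μ {x ∈ ball x₀ r | ENNReal.ofReal t < ∫⁻ y, ENNReal.ofReal (dist x y ^ (α - d)) ∂ν} ≤
          ENNReal.ofReal (K * δ ^ (d - lam) * r ^ lam) := by
  set β := d - lam - α with hβ
  have hβpos : 0 < β := by linarith
  have h2β : (2 : ℝ) ^ (-β) < 1 := Real.rpow_lt_one_of_one_lt_of_neg one_lt_two (by linarith)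
  have h2α : (2 : ℝ)⁻¹ ^ α < 1 := Real.rpow_lt_one (by norm_num) (by norm_num) hα
  set cF := 2 ^ lam / (1 - (2 : ℝ) ^ (-β)) with hcF
  have hcFpos : 0 < cF := div_pos (by positivity) (by linarith)
  set K₁ := 2 ^ d * V * 2 ^ lam / (2 ^ α * (1 - (2 : ℝ)⁻¹ ^ α) * cF) with hK₁
  refine ⟨2 * cF, max K₁ V, by positivity, lt_max_of_lt_right hV,
    fun ν _ A hA hν x₀ r t δ hr ht hδ hscale => ?_⟩
  have ht' : t = 2 * cF * A / δ ^ β := by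
    rw [_root_.eq_div_iff (by positivity), hscale]
  have hfar : 2 ^ lam * A * δ ^ (lam + (α - d)) / (1 - 2 ^ (lam + (α - d))) ≤ t / 2 := by
    rw [show lam + (α - d) = -β by ring, Real.rpow_neg hδ.le, ht', hcF]
    apply le_of_eq
    field_simp
  have hdl : δ ^ (d - lam) = δ ^ β * δ ^ α := by
    rw [← Real.rpow_add hδ, hβ]
    ring_nf
  rcases le_or_gt δ r with hδr | hrδ
  · refine (hμ.measure_superlevel_le hV.le hν hA.le (by linarith) (by linarith) (by linarith)
      ht hδ hfar x₀ hr).trans (ENNReal.ofReal_le_ofReal ?_)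
    calc 2 / t * (2 ^ d * V * (δ / 2) ^ (d + (α - d)) / (1 - 2⁻¹ ^ (d + (α - d)))) *
          (A * (r + δ) ^ lam)
        ≤ 2 / t * (2 ^ d * V * (δ / 2) ^ α / (1 - 2⁻¹ ^ α)) * (A * (2 * r) ^ lam) := by
          rw [add_sub_cancel]
          gcongr
          linarith
      _ = K₁ * δ ^ (d - lam) * r ^ lam := by
          rw [Real.div_rpow hδ.le zero_le_two, Real.mul_rpow zero_le_two hr.le, hdl, ht', hK₁]
          field_simp
      _ ≤ max K₁ V * δ ^ (d - lam) * r ^ lam := by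
          gcongr
          exact le_max_left _ _
  · calc μ {x ∈ ball x₀ r | ENNReal.ofReal t < ∫⁻ y, ENNReal.ofReal (dist x y ^ (α - d)) ∂ν}
        ≤ μ (closedBall x₀ r) := measure_mono ((sep_subset _ _).trans ball_subset_closedBall)
      _ ≤ ENNReal.ofReal (V * r ^ d) := hμ x₀ r hr
      _ ≤ ENNReal.ofReal (max K₁ V * δ ^ (d - lam) * r ^ lam) := by
          refine ENNReal.ofReal_le_ofReal ?_
          rw [show r ^ d = r ^ (d - lam) * r ^ lam by rw [← Real.rpow_add hr]; ring_nf,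
            ← mul_assoc]
          gcongr
          · exact le_max_right _ _
          · linarith

theorem HasGrowth.exists_weak_type_bound {d lam V α : ℝ} (hμ : HasGrowth μ d V) (hV : 0 < V)
    (hlam : 0 ≤ lam) (hα : 0 < α) (hαd : α < d - lam) :
    ∃ C : ℝ, 0 < C ∧ ∀ (ν : Measure X) [SFinite ν] (A : ℝ), 0 ≤ A → HasGrowth ν lam A →
      ∀ (x₀ : X) {r t : ℝ}, 0 < r → 0 < t →
        ENNReal.ofReal (r ^ (-(lam / ((d - lam) / (d - lam - α))))) *
          (ENNReal.ofReal t *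
            μ {x ∈ ball x₀ r | ENNReal.ofReal t < ∫⁻ y, ENNReal.ofReal (dist x y ^ (α - d)) ∂ν} ^
              (1 / ((d - lam) / (d - lam - α)))) ≤
        ENNReal.ofReal (C * A) := by
  obtain ⟨c, K, hc, hK, hbound⟩ := hμ.exists_measure_superlevel_le hV hlam hα hαd
  set q := (d - lam) / (d - lam - α) with hq
  have hβ : 0 < d - lam - α := by linarith
  have hq0 : 0 < q := div_pos (by linarith) hβ
  have hs : 0 < 1 / q := one_div_pos.2 hq0
  refine ⟨c * K ^ (1 / q), by positivity, fun ν _ A hA hν x₀ r t hr ht => ?_⟩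
  rcases hA.eq_or_lt with rfl | hApos
  · simp [hν.eq_zero, hq0]
  set δ := (c * A / t) ^ (1 / (d - lam - α)) with hδ
  have hδpos : 0 < δ := by positivity
  have hscale : t * δ ^ (d - lam - α) = c * A := by
    rw [hδ, ← Real.rpow_mul (by positivity), one_div_mul_cancel hβ.ne', Real.rpow_one]
    field_simp
  have hexp : (d - lam) * (1 / q) = d - lam - α := by
    have : d - lam ≠ 0 := by linarith
    rw [hq]
    field_simp
  calc ENNReal.ofReal (r ^ (-(lam / q))) * (ENNReal.ofReal t * μ {x ∈ ball x₀ r |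
          ENNReal.ofReal t < ∫⁻ y, ENNReal.ofReal (dist x y ^ (α - d)) ∂ν} ^ (1 / q))
      ≤ ENNReal.ofReal (r ^ (-(lam / q))) * (ENNReal.ofReal t *
          ENNReal.ofReal (K * δ ^ (d - lam) * r ^ lam) ^ (1 / q)) := by
        gcongr
        exact hbound ν A hApos hν x₀ hr ht hδpos hscale
    _ = ENNReal.ofReal (r ^ (-(lam / q)) * r ^ (lam * (1 / q)) *
          (K ^ (1 / q) * (t * δ ^ (d - lam - α)))) := by
        rw [ENNReal.ofReal_rpow_of_nonneg (by positivity) hs.le, ← ENNReal.ofReal_mul ht.le,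
          ← ENNReal.ofReal_mul (by positivity), Real.mul_rpow (by positivity) (by positivity),
          Real.mul_rpow hK.le (by positivity), ← Real.rpow_mul hδpos.le, ← Real.rpow_mul hr.le,
          hexp]
        ring_nf
    _ = ENNReal.ofReal (c * K ^ (1 / q) * A) := by
        rw [hscale, ← Real.rpow_add hr, mul_one_div, neg_add_cancel, Real.rpow_zero]
        ring_nf

end MetricMeasure

lemma hasGrowth_addHaar {E : Type*} [NormedAddCommGroup E] [NormedSpace ℝ E] [MeasurableSpace E]
    [BorelSpace E] [FiniteDimensional ℝ E] (μ : Measure E) [μ.IsAddHaarMeasure] :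
    HasGrowth μ (Module.finrank ℝ E) (μ (ball 0 1)).toReal := by
  intro x ρ hρ
  rw [Measure.addHaar_closedBall μ x hρ.le, Real.rpow_natCast, mul_comm,
    ENNReal.ofReal_mul ENNReal.toReal_nonneg, ENNReal.ofReal_toReal measure_ball_lt_top.ne]

section Euclidean

variable {n : ℕ} {lam : ℝ} {f : EuclideanSpace ℝ (Fin n) → ℝ}

lemma lintegral_ball_le_morreyNorm (x : EuclideanSpace ℝ (Fin n)) {r : ℝ} (hr : 0 < r) :
    ∫⁻ y in ball x r, ENNReal.ofReal |f y| ≤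
      ENNReal.ofReal (r ^ lam) * morreyNorm 1 lam univ f := by
  have hsup : ENNReal.ofReal (r ^ (-(lam / 1))) * ∫⁻ y in ball x r, ENNReal.ofReal |f y| ≤
      morreyNorm 1 lam univ f := by
    refine le_of_eq_of_le ?_ (le_iSup₂_of_le x r (le_iSup_of_le hr le_rfl))
    simp_rw [inter_univ, ENNReal.ofReal_one, eLpNorm_one_eq_lintegral_enorm,
      enorm_indicator_eq_indicator_enorm, Real.enorm_eq_ofReal_abs,
      lintegral_indicator measurableSet_ball]
  calc ∫⁻ y in ball x r, ENNReal.ofReal |f y|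
      = ENNReal.ofReal (r ^ lam) *
          (ENNReal.ofReal (r ^ (-(lam / 1))) * ∫⁻ y in ball x r, ENNReal.ofReal |f y|) := by
        rw [← mul_assoc, ← ENNReal.ofReal_mul (by positivity), ← Real.rpow_add hr, div_one,
          add_neg_cancel, Real.rpow_zero, ENNReal.ofReal_one, one_mul]
    _ ≤ _ := by gcongr

lemma hasGrowth_withDensity_of_morreyNorm_ne_top (hM : morreyNorm 1 lam univ f ≠ ⊤) :
    HasGrowth (volume.withDensity fun y => ENNReal.ofReal |f y|) lam
      (2 ^ lam * (morreyNorm 1 lam univ f).toReal) := by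
  intro x ρ hρ
  calc (volume.withDensity fun y => ENNReal.ofReal |f y|) (closedBall x ρ)
      ≤ ∫⁻ y in ball x (2 * ρ), ENNReal.ofReal |f y| := by
        rw [← withDensity_apply _ measurableSet_ball]
        exact measure_mono (closedBall_subset_ball (by linarith))
    _ ≤ ENNReal.ofReal ((2 * ρ) ^ lam) * morreyNorm 1 lam univ f :=
        lintegral_ball_le_morreyNorm x (by positivity)
    _ = _ := by
        rw [← ENNReal.ofReal_toReal hM, ← ENNReal.ofReal_mul (by positivity),
          Real.mul_rpow zero_le_two hρ.le, ENNReal.toReal_ofReal ENNReal.toReal_nonneg]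
        ring_nf

lemma rieszPotential_eq_toReal_lintegral {α : ℝ} (hf : Measurable f)
    (x : EuclideanSpace ℝ (Fin n)) :
    rieszPotential α f x = (∫⁻ y, ENNReal.ofReal (dist x y ^ (α - n))
      ∂volume.withDensity fun y => ENNReal.ofReal |f y|).toReal := by
  rw [rieszPotential, lintegral_withDensity_eq_lintegral_mul _ (by fun_prop)
    ((continuous_const.dist continuous_id').measurable.pow_const _).ennreal_ofReal]
  congr 1
  refine lintegral_congr fun y => ?_
  rw [Pi.mul_apply, dist_eq_norm, ENNReal.ofReal_mul (by positivity), mul_comm]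

end Euclidean

lemma weakMorreyNorm_le {n : ℕ} {q s : ℝ} {Ω : Set (EuclideanSpace ℝ (Fin n))}
    {g : EuclideanSpace ℝ (Fin n) → ℝ} {B : ℝ≥0∞}
    (h : ∀ x₀ r, 0 < r → ∀ t, 0 < t → ENNReal.ofReal (r ^ (-(s / q))) *
      (ENNReal.ofReal t * volume {x ∈ ball x₀ r ∩ Ω | t < |g x|} ^ (1 / q)) ≤ B) :
    weakMorreyNorm q s Ω g ≤ B := by
  refine iSup₂_le fun x₀ r => iSup_le fun hr => ?_
  rw [weakLpOn, ENNReal.mul_iSup]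
  refine iSup_le fun t => ?_
  rw [ENNReal.mul_iSup]
  exact iSup_le (h x₀ r hr t)

lemma ENNReal.ofReal_lt_of_lt_abs_toReal {t : ℝ} (ht : 0 ≤ t) {G : ℝ≥0∞} (h : t < |G.toReal|) :
    ENNReal.ofReal t < G := by
  rcases eq_or_ne G ⊤ with rfl | hG
  · exact ENNReal.ofReal_lt_top
  rw [abs_of_nonneg ENNReal.toReal_nonneg] at h
  exact (ENNReal.ofReal_lt_iff_lt_toReal ht hG).2 h

theorem adams_riesz_weak_morrey_general (n : ℕ) (α lam : ℝ)
    (hl1 : 0 ≤ lam) (hα1 : 0 < α) (hα2 : α < (n : ℝ) - lam) :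
    ∃ C : ℝ, 0 < C ∧ ∀ f : EuclideanSpace ℝ (Fin n) → ℝ, Measurable f →
      weakMorreyNorm (((n : ℝ) - lam) / ((n : ℝ) - lam - α)) lam Set.univ
          (rieszPotential α f) ≤
        ENNReal.ofReal C * morreyNorm 1 lam Set.univ f := by
  have hvol := hasGrowth_addHaar (volume : Measure (EuclideanSpace ℝ (Fin n)))
  rw [finrank_euclideanSpace_fin] at hvol
  obtain ⟨C, hC, hweak⟩ := hvol.exists_weak_type_bound
    (ENNReal.toReal_pos (measure_ball_pos _ _ one_pos).ne' measure_ball_lt_top.ne) hl1 hα1 hα2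
  refine ⟨2 ^ lam * C, by positivity, fun f hf => ?_⟩
  rcases eq_or_ne (morreyNorm 1 lam univ f) ⊤ with hM | hM
  · rw [hM, ENNReal.mul_top (ENNReal.ofReal_pos.2 (by positivity)).ne']
    exact le_top
  refine weakMorreyNorm_le fun x₀ r hr t ht => le_trans ?_ ((hweak _ _ (by positivity)
    (hasGrowth_withDensity_of_morreyNorm_ne_top hM) x₀ hr ht).trans_eq ?_)
  · gcongr
    · exact one_div_nonneg.2 (div_nonneg (by linarith) (by linarith))
    · exact inter_subset_left
    -- `rieszPotential` is `0` where the lintegral is `∞`, which only shrinks the superlevel set.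
    · rw [rieszPotential_eq_toReal_lintegral hf]
      exact ENNReal.ofReal_lt_of_lt_abs_toReal ht.le
  · rw [← mul_assoc, mul_comm C, ENNReal.ofReal_mul (by positivity), ENNReal.ofReal_toReal hM]

/-- (Adams, weak endpoint) For `0 ≤ λ < n` and `0 < α < n - λ`, the Riesz potential `I_α` is
bounded from `M^{1,λ}(ℝⁿ)` to the weak Morrey space `M_*^{(n-λ)/(n-λ-α),λ}(ℝⁿ)`. -/
theorem adams_riesz_weak_morrey (n : ℕ) (α lam : ℝ) (hn : 0 < n)
    (hl1 : 0 ≤ lam) (hl2 : lam < n) (hα1 : 0 < α) (hα2 : α < (n : ℝ) - lam) :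
    ∃ C : ℝ, 0 < C ∧ ∀ f : EuclideanSpace ℝ (Fin n) → ℝ, Measurable f →
      weakMorreyNorm (((n : ℝ) - lam) / ((n : ℝ) - lam - α)) lam Set.univ
          (rieszPotential α f) ≤
        ENNReal.ofReal C * morreyNorm 1 lam Set.univ f :=
  adams_riesz_weak_morrey_general n α lam hl1 hα1 hα2
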